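/- Let n be a finite nonempty index type and Q an n×n real matrix with nonnegative off-diagonal entries and all row sums equal to zero (a CTMC generator matrix). Then for every real t ≥ 0, the matrix exp(t • Q) is a (row-)stochastic matrix: all its entries are nonnegative and every row sums to one. Consequently, if v : n → ℝ is a probability vector (entrywise nonnegative with ∑_i v i = 1), then the transient distribution vᵀ · exp(t • Q) is again a probability vector for every t ≥ 0. -/

import Mathlib

/-!
Shifting `A` by a multiple `c • 1` of the identity with `c` large makes every entry nonnegative,
and since `c • 1` is central this only rescales the exponential:
`exp A = Real.exp (-c) • exp (A + c • 1)`. The exponential series of an entrywise nonnegative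
matrix has nonnegative terms, so `exp A` is entrywise nonnegative whenever the off-diagonal
entries of `A` are. If moreover `A *ᵥ 1 = 0`, every term of the series of `exp A *ᵥ 1` but the
zeroth vanishes, so `exp A *ᵥ 1 = 1`.
-/

open NormedSpace Matrix
open scoped Nat

namespace Matrix

variable {n : Type*} [Fintype n] [DecidableEq n]

theorem hasSum_exp_series (A : Matrix n n ℝ) :
    HasSum (fun k => (k !⁻¹ : ℝ) • A ^ k) (exp A) := by
  open scoped Norms.Operator in exact exp_series_hasSum_exp' A

theorem exp_apply_nonneg {A : Matrix n n ℝ} (hA : ∀ i j, 0 ≤ A i j) (i j : n) :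
    0 ≤ exp A i j :=
  (Pi.hasSum.1 (Pi.hasSum.1 (hasSum_exp_series A) i) j).nonneg fun k =>
    mul_nonneg (by positivity) (pow_apply_nonneg hA k i j)

theorem exp_add_smul_one (A : Matrix n n ℝ) (r : ℝ) :
    exp (A + r • 1) = Real.exp r • exp A := by
  rw [exp_add_of_commute _ _ ((Commute.one_right A).smul_right r), smul_one_eq_diagonal,
    exp_diagonal, Pi.exp_def, ← Real.exp_eq_exp_ℝ, ← smul_one_eq_diagonal, Matrix.mul_smul,
    mul_one]

theorem exp_apply_nonneg_of_offDiag_nonneg {A : Matrix n n ℝ}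
    (hA : ∀ i j, i ≠ j → 0 ≤ A i j) (i j : n) : 0 ≤ exp A i j := by
  set c := ∑ k, |A k k|
  have hshift : ∀ i j, 0 ≤ (A + c • 1) i j := by
    intro i j
    rcases eq_or_ne i j with rfl | hij
    · have : |A i i| ≤ c := Finset.single_le_sum (f := fun k => |A k k|)
        (fun k _ => abs_nonneg _) (Finset.mem_univ i)
      simp only [add_apply, smul_apply, one_apply_eq, smul_eq_mul, mul_one]
      linarith [neg_abs_le (A i i)]
    · simpa [one_apply_ne hij] using hA i j hij
  have hexp : exp A = Real.exp (-c) • exp (A + c • 1) := by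
    rw [exp_add_smul_one, smul_smul, ← Real.exp_add, neg_add_cancel, Real.exp_zero, one_smul]
  rw [hexp]
  exact mul_nonneg (Real.exp_nonneg _) (exp_apply_nonneg hshift i j)

theorem exp_mulVec_of_mulVec_eq_zero {A : Matrix n n ℝ} {x : n → ℝ} (hA : A *ᵥ x = 0) :
    exp A *ᵥ x = x := by
  have hpow : ∀ k, A ^ (k + 1) *ᵥ x = 0 := fun k => by
    rw [pow_succ, ← mulVec_mulVec, hA, mulVec_zero]
  have hseries := (hasSum_exp_series A).map (mulVec.addMonoidHomLeft x)
    (continuous_id.matrix_mulVec continuous_const)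
  refine hseries.unique (hasSum_single 0 fun k hk => ?_) |>.trans ?_
  · obtain ⟨k, rfl⟩ := Nat.exists_eq_add_one_of_ne_zero hk
    simp [mulVec.addMonoidHomLeft, smul_mulVec, hpow]
  · simp [mulVec.addMonoidHomLeft]

theorem exp_mem_rowStochastic {A : Matrix n n ℝ} (hoff : ∀ i j, i ≠ j → 0 ≤ A i j)
    (hrow : A *ᵥ 1 = 0) : exp A ∈ rowStochastic ℝ n :=
  ⟨exp_apply_nonneg_of_offDiag_nonneg hoff, exp_mulVec_of_mulVec_eq_zero hrow⟩

end Matrix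

theorem exp_generator_stochastic_general {n : Type*} [Fintype n] [DecidableEq n]
    (Q : Matrix n n ℝ) (hoff : ∀ i j, i ≠ j → 0 ≤ Q i j) (hrow : ∀ i, ∑ j, Q i j = 0)
    (t : ℝ) (ht : 0 ≤ t) :
    (∀ i j, 0 ≤ (NormedSpace.exp (t • Q)) i j) ∧
    (∀ i, ∑ j, (NormedSpace.exp (t • Q)) i j = 1) ∧
    ∀ v : n → ℝ, (∀ i, 0 ≤ v i) → ∑ i, v i = 1 →
      (∀ j, 0 ≤ Matrix.vecMul v (NormedSpace.exp (t • Q)) j) ∧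
      ∑ j, Matrix.vecMul v (NormedSpace.exp (t • Q)) j = 1 := by
  have hQ1 : Q *ᵥ 1 = 0 := funext fun i => by simpa [mulVec, dotProduct] using hrow i
  have hP : exp (t • Q) ∈ rowStochastic ℝ n :=
    exp_mem_rowStochastic (fun i j hij => mul_nonneg ht (hoff i j hij))
      (by rw [smul_mulVec, hQ1, smul_zero])
  refine ⟨fun i j => nonneg_of_mem_rowStochastic hP, sum_row_of_mem_rowStochastic hP,
    fun v hv hv1 => ⟨nonneg_vecMul_of_mem_rowStochastic hP hv, ?_⟩⟩
  rw [← dotProduct_one] at hv1 ⊢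
  exact vecMul_dotProduct_one_eq_one_rowStochastic hP hv1

/-- For a CTMC generator matrix `Q` (nonnegative off-diagonal entries, zero row sums) and
`t ≥ 0`, the matrix `exp (t • Q)` is row-stochastic, and consequently it maps every initial
probability vector `v` to a probability vector `vᵀ · exp (t • Q)`. -/
theorem exp_generator_stochastic {n : Type*} [Fintype n] [Nonempty n] [DecidableEq n]
    (Q : Matrix n n ℝ) (hoff : ∀ i j, i ≠ j → 0 ≤ Q i j) (hrow : ∀ i, ∑ j, Q i j = 0)
    (t : ℝ) (ht : 0 ≤ t) :
    (∀ i j, 0 ≤ (NormedSpace.exp (t • Q)) i j) ∧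
    (∀ i, ∑ j, (NormedSpace.exp (t • Q)) i j = 1) ∧
    ∀ v : n → ℝ, (∀ i, 0 ≤ v i) → ∑ i, v i = 1 →
      (∀ j, 0 ≤ Matrix.vecMul v (NormedSpace.exp (t • Q)) j) ∧
      ∑ j, Matrix.vecMul v (NormedSpace.exp (t • Q)) j = 1 :=
  exp_generator_stochastic_general Q hoff hrow t ht
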